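/- arXiv:1903.05677 — 5 statements merged into one kernel-verified Lean document; each statement's English description precedes it below -/
import Mathlib

section
/- Let n, N, K be positive integers. Let y_1, …, y_N ∈ ℂ^n \ {0} be a frame for ℂ^n with lower frame bound A_N and upper frame bound B_N, let z_1, …, z_K ∈ ℂ^n \ {0}, and suppose there exists k₀ ∈ {1, …, K} such that m_z := min_{1 ≤ i ≤ n} |z_{k₀}(i)| > 0. Define x_{j,k} := y_j ⊙ z_k for 1 ≤ j ≤ N, 1 ≤ k ≤ K. Then for every x ∈ ℂ^n, m_z²·A_N·‖x‖² ≤ Σ_{j=1}^N Σ_{k=1}^K |⟨x, x_{j,k}⟩|² ≤ K·B_N·(max_{1 ≤ k ≤ K} ‖z_k‖_∞²)·‖x‖². In particular, X = {x_{j,k} : 1 ≤ j ≤ N, 1 ≤ k ≤ K} is a multiplicative frame for ℂ^n. -/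
/-!
Multiplying by `z k` coordinatewise is adjoint to multiplying by `conj (z k)`, so
`⟪x, y j ⊙ z k⟫ = ⟪x ⊙ conj (z k), y j⟫`. For each fixed `k` the sum over `j` is therefore the
frame sum of `y` at `x ⊙ conj (z k)`, whose squared norm lies between `m_z² ‖x‖²` (for `k = k₀`)
and `‖z k‖_∞² ‖x‖²`. Dropping all `k ≠ k₀` gives the lower bound, summing the `K` upper
bounds gives the upper one, and a positive lower frame bound forces the family to span.
-/

open Finset ComplexConjugate

namespace EuclideanSpace

variable {𝕜 ι : Type*} [RCLike 𝕜]

def mulConj (x z : EuclideanSpace 𝕜 ι) : EuclideanSpace 𝕜 ι :=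
  WithLp.toLp 2 fun i => x i * conj (z i)

theorem norm_mulConj_apply_sq (x z : EuclideanSpace 𝕜 ι) (i : ι) :
    ‖mulConj x z i‖ ^ 2 = ‖z i‖ ^ 2 * ‖x i‖ ^ 2 := by
  simp only [mulConj, PiLp.toLp_apply, norm_mul, RCLike.norm_conj]
  ring

variable [Fintype ι]

theorem norm_mulConj_sq_le {z : EuclideanSpace 𝕜 ι} {c : ℝ} (hz : ∀ i, ‖z i‖ ^ 2 ≤ c)
    (x : EuclideanSpace 𝕜 ι) : ‖mulConj x z‖ ^ 2 ≤ c * ‖x‖ ^ 2 := by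
  rw [norm_sq_eq, norm_sq_eq, mul_sum]
  refine sum_le_sum fun i _ => ?_
  rw [norm_mulConj_apply_sq]
  exact mul_le_mul_of_nonneg_right (hz i) (by positivity)

theorem le_norm_mulConj_sq {z : EuclideanSpace 𝕜 ι} {c : ℝ} (hz : ∀ i, c ≤ ‖z i‖ ^ 2)
    (x : EuclideanSpace 𝕜 ι) : c * ‖x‖ ^ 2 ≤ ‖mulConj x z‖ ^ 2 := by
  rw [norm_sq_eq, norm_sq_eq, mul_sum]
  refine sum_le_sum fun i _ => ?_
  rw [norm_mulConj_apply_sq]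
  exact mul_le_mul_of_nonneg_right (hz i) (by positivity)

theorem inner_eq_inner_mulConj {x v y z : EuclideanSpace 𝕜 ι}
    (hv : ∀ i, v i = y i * z i) : inner 𝕜 x v = inner 𝕜 (mulConj x z) y := by
  simp only [PiLp.inner_apply, RCLike.inner_apply, hv, mulConj, map_mul, RCLike.conj_conj]
  exact sum_congr rfl fun i _ => by ring

section HadamardFrame

variable {J K : Type*} [Fintype J] [Fintype K] {y : J → EuclideanSpace 𝕜 ι}
  {z : K → EuclideanSpace 𝕜 ι} {X : J → K → EuclideanSpace 𝕜 ι}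

theorem sum_norm_inner_hadamard_sq (hX : ∀ j k i, X j k i = y j i * z k i)
    (x : EuclideanSpace 𝕜 ι) :
    ∑ j, ∑ k, ‖(inner 𝕜 x (X j k) : 𝕜)‖ ^ 2 =
      ∑ k, ∑ j, ‖(inner 𝕜 (mulConj x (z k)) (y j) : 𝕜)‖ ^ 2 := by
  rw [sum_comm]
  simp only [inner_eq_inner_mulConj (hX _ _)]

theorem lower_frame_bound_hadamard {A m : ℝ} (hA : 0 ≤ A)
    (hy : ∀ x, A * ‖x‖ ^ 2 ≤ ∑ j, ‖(inner 𝕜 x (y j) : 𝕜)‖ ^ 2)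
    {k₀ : K} (hz : ∀ i, m ≤ ‖z k₀ i‖ ^ 2) (hX : ∀ j k i, X j k i = y j i * z k i)
    (x : EuclideanSpace 𝕜 ι) :
    m * A * ‖x‖ ^ 2 ≤ ∑ j, ∑ k, ‖(inner 𝕜 x (X j k) : 𝕜)‖ ^ 2 := by
  rw [sum_norm_inner_hadamard_sq hX]
  calc m * A * ‖x‖ ^ 2 = A * (m * ‖x‖ ^ 2) := by ring
    _ ≤ A * ‖mulConj x (z k₀)‖ ^ 2 := mul_le_mul_of_nonneg_left (le_norm_mulConj_sq hz x) hA
    _ ≤ ∑ j, ‖(inner 𝕜 (mulConj x (z k₀)) (y j) : 𝕜)‖ ^ 2 := hy _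
    _ ≤ _ := single_le_sum (f := fun k => ∑ j, ‖(inner 𝕜 (mulConj x (z k)) (y j) : 𝕜)‖ ^ 2)
      (fun k _ => by positivity) (mem_univ k₀)

theorem upper_frame_bound_hadamard {B S : ℝ} (hB : 0 ≤ B)
    (hy : ∀ x, ∑ j, ‖(inner 𝕜 x (y j) : 𝕜)‖ ^ 2 ≤ B * ‖x‖ ^ 2)
    (hz : ∀ k i, ‖z k i‖ ^ 2 ≤ S) (hX : ∀ j k i, X j k i = y j i * z k i)
    (x : EuclideanSpace 𝕜 ι) :
    ∑ j, ∑ k, ‖(inner 𝕜 x (X j k) : 𝕜)‖ ^ 2 ≤ Fintype.card K * B * S * ‖x‖ ^ 2 := by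
  rw [sum_norm_inner_hadamard_sq hX]
  calc _ ≤ ∑ _k : K, B * (S * ‖x‖ ^ 2) := sum_le_sum fun k _ =>
        (hy _).trans (mul_le_mul_of_nonneg_left (norm_mulConj_sq_le (hz k) x) hB)
    _ = Fintype.card K * B * S * ‖x‖ ^ 2 := by
      rw [sum_const, card_univ, nsmul_eq_mul]
      ring

end HadamardFrame

end EuclideanSpace

theorem Submodule.span_range_eq_top_of_lower_frame_bound {𝕜 E ι : Type*} [RCLike 𝕜]
    [NormedAddCommGroup E] [InnerProductSpace 𝕜 E] [FiniteDimensional 𝕜 E] [Fintype ι]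
    {v : ι → E} {A : ℝ} (hA : 0 < A) (h : ∀ x, A * ‖x‖ ^ 2 ≤ ∑ i, ‖(inner 𝕜 x (v i) : 𝕜)‖ ^ 2) :
    span 𝕜 (Set.range v) = ⊤ := by
  rw [← orthogonal_eq_bot_iff, eq_bot_iff]
  intro x hx
  have hv : ∀ i, inner 𝕜 x (v i) = (0 : 𝕜) := fun i =>
    (mem_orthogonal' _ x).1 hx (v i) (subset_span ⟨i, rfl⟩)
  have hx0 : A * ‖x‖ ^ 2 ≤ 0 := by simpa [hv] using h x
  simpa using nonpos_of_mul_nonpos_right hx0 hA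

open EuclideanSpace in
theorem multiplicative_frame_construction_a_general
    (n N K : ℕ)
    (y : Fin N → EuclideanSpace ℂ (Fin n))
    (z : Fin K → EuclideanSpace ℂ (Fin n))
    (AN BN : ℝ) (hAN : 0 < AN) (hBN : 0 < BN)
    (hframe : ∀ x : EuclideanSpace ℂ (Fin n),
      AN * ‖x‖ ^ 2 ≤ ∑ j, ‖(inner ℂ x (y j) : ℂ)‖ ^ 2 ∧
      ∑ j, ‖(inner ℂ x (y j) : ℂ)‖ ^ 2 ≤ BN * ‖x‖ ^ 2)
    (k₀ : Fin K) (mz : ℝ) (hmz : mz = ⨅ i : Fin n, ‖z k₀ i‖) (hmzpos : 0 < mz)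
    (X : Fin N → Fin K → EuclideanSpace ℂ (Fin n))
    (hX : ∀ j k i, X j k i = y j i * z k i) :
    (∀ x : EuclideanSpace ℂ (Fin n),
      mz ^ 2 * AN * ‖x‖ ^ 2 ≤ ∑ j, ∑ k, ‖(inner ℂ x (X j k) : ℂ)‖ ^ 2 ∧
      ∑ j, ∑ k, ‖(inner ℂ x (X j k) : ℂ)‖ ^ 2 ≤
        (K : ℝ) * BN * (⨆ k : Fin K, (⨆ i : Fin n, ‖z k i‖) ^ 2) * ‖x‖ ^ 2) ∧
    Submodule.span ℂ (Set.range fun p : Fin N × Fin K => X p.1 p.2) = ⊤ := by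
  have hz_le : ∀ k i, ‖z k i‖ ^ 2 ≤ ⨆ k : Fin K, (⨆ i : Fin n, ‖z k i‖) ^ 2 := fun k i =>
    (pow_le_pow_left₀ (norm_nonneg _)
      (le_ciSup (f := fun i => ‖z k i‖) (Set.finite_range _).bddAbove i) 2).trans
      (le_ciSup (f := fun k => (⨆ i, ‖z k i‖) ^ 2) (Set.finite_range _).bddAbove k)
  have hmz_le : ∀ i, mz ^ 2 ≤ ‖z k₀ i‖ ^ 2 := fun i =>
    pow_le_pow_left₀ hmzpos.le (hmz ▸ ciInf_le (Set.finite_range _).bddBelow i) 2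
  have hlower := lower_frame_bound_hadamard hAN.le (fun x => (hframe x).1) hmz_le hX
  have hupper := upper_frame_bound_hadamard hBN.le (fun x => (hframe x).2) hz_le hX
  refine ⟨fun x => ⟨hlower x, by simpa using hupper x⟩, ?_⟩
  refine Submodule.span_range_eq_top_of_lower_frame_bound (A := mz ^ 2 * AN) (by positivity)
    fun x => ?_
  rw [Fintype.sum_prod_type]
  exact hlower x

/-- Theorem (A construction of multiplicative frames, part a):
If `y₁, …, y_N ∈ ℂⁿ \ {0}` is a frame for `ℂⁿ` with lower frame bound `A_N` and
upper frame bound `B_N`, `z₁, …, z_K ∈ ℂⁿ \ {0}`, and some `z_{k₀}` has all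
coordinates of modulus at least `m_z > 0`, then the pointwise products
`X j k = y j ⊙ z k` satisfy, for every `x ∈ ℂⁿ`,
`m_z² A_N ‖x‖² ≤ Σ_{j,k} |⟨x, X j k⟩|² ≤ K B_N (max_k ‖z k‖_∞²) ‖x‖²`;
in particular `X` is a (multiplicative) frame, i.e. it spans `ℂⁿ`. -/
theorem multiplicative_frame_construction_a
    (n N K : ℕ) (hn : 0 < n) (hN : 0 < N) (hK : 0 < K)
    (y : Fin N → EuclideanSpace ℂ (Fin n))
    (z : Fin K → EuclideanSpace ℂ (Fin n))
    (hy0 : ∀ j, y j ≠ 0) (hz0 : ∀ k, z k ≠ 0)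
    (AN BN : ℝ) (hAN : 0 < AN) (hBN : 0 < BN)
    (hframe : ∀ x : EuclideanSpace ℂ (Fin n),
      AN * ‖x‖ ^ 2 ≤ ∑ j, ‖(inner ℂ x (y j) : ℂ)‖ ^ 2 ∧
      ∑ j, ‖(inner ℂ x (y j) : ℂ)‖ ^ 2 ≤ BN * ‖x‖ ^ 2)
    (k₀ : Fin K) (mz : ℝ) (hmz : mz = ⨅ i : Fin n, ‖z k₀ i‖) (hmzpos : 0 < mz)
    (X : Fin N → Fin K → EuclideanSpace ℂ (Fin n))
    (hX : ∀ j k i, X j k i = y j i * z k i) :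
    (∀ x : EuclideanSpace ℂ (Fin n),
      mz ^ 2 * AN * ‖x‖ ^ 2 ≤ ∑ j, ∑ k, ‖(inner ℂ x (X j k) : ℂ)‖ ^ 2 ∧
      ∑ j, ∑ k, ‖(inner ℂ x (X j k) : ℂ)‖ ^ 2 ≤
        (K : ℝ) * BN * (⨆ k : Fin K, (⨆ i : Fin n, ‖z k i‖) ^ 2) * ‖x‖ ^ 2) ∧
    Submodule.span ℂ (Set.range fun p : Fin N × Fin K => X p.1 p.2) = ⊤ :=
  multiplicative_frame_construction_a_general n N K y z AN BN hAN hBN hframe k₀ mz hmz hmzpos X hX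
end

section
/- Let n, N, K be positive integers and B_N > 0. Let y_1, …, y_N ∈ ℂ^n satisfy the Bessel bound Σ_{j=1}^N |⟨x, y_j⟩|² ≤ B_N·‖x‖² for all x ∈ ℂ^n, and let z_1, …, z_K ∈ ℂ^n be arbitrary. Then the pointwise products x_{j,k} := y_j ⊙ z_k form a Bessel sequence for ℂ^n with Bessel bound K·B_N·(max_{1 ≤ k ≤ K} ‖z_k‖_∞²); that is, for every x ∈ ℂ^n, Σ_{j=1}^N Σ_{k=1}^K |⟨x, x_{j,k}⟩|² ≤ K·B_N·(max_{1 ≤ k ≤ K} ‖z_k‖_∞²)·‖x‖². -/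
/-!
Moving the Hadamard factor across the inner product, `⟪x, y ⊙ z⟫ = ⟪x ⊙ z̄, y⟫`, turns the
inner products with `y_j ⊙ z_k` into inner products of the vectors `x ⊙ z̄_k` with the
Bessel sequence `y_j`. Since `‖x ⊙ z̄_k‖² ≤ ‖z_k‖_∞² ‖x‖²`, each of the `K` sums over `j`
is at most `B_N · max_k ‖z_k‖_∞² · ‖x‖²`.
-/

open scoped ComplexConjugate InnerProductSpace

namespace EuclideanSpace

variable {𝕜 ι : Type*} [RCLike 𝕜] [Fintype ι]

theorem inner_eq_inner_mul_conj {x y z w : EuclideanSpace 𝕜 ι} (hw : ∀ i, w i = y i * z i) :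
    ⟪x, w⟫_𝕜 = ⟪WithLp.toLp 2 fun i => x i * conj (z i), y⟫_𝕜 := by
  simp only [PiLp.inner_apply, RCLike.inner_apply, hw, map_mul, RCLike.conj_conj]
  exact Finset.sum_congr rfl fun i _ => by ring

theorem norm_sq_mul_le (x : EuclideanSpace 𝕜 ι) {c : ι → 𝕜} {C : ℝ}
    (hc : ∀ i, ‖c i‖ ^ 2 ≤ C) :
    ‖WithLp.toLp 2 fun i => x i * c i‖ ^ 2 ≤ C * ‖x‖ ^ 2 := by
  simp only [norm_sq_eq, norm_mul, mul_pow, Finset.mul_sum]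
  exact Finset.sum_le_sum fun i _ => by
    rw [mul_comm C]
    exact mul_le_mul_of_nonneg_left (hc i) (sq_nonneg _)

end EuclideanSpace

theorem multiplicative_bessel_bound_general
    (n N K : ℕ)
    (BN : ℝ) (hBN : 0 < BN)
    (y : Fin N → EuclideanSpace ℂ (Fin n))
    (z : Fin K → EuclideanSpace ℂ (Fin n))
    (hbessel : ∀ x : EuclideanSpace ℂ (Fin n),
      ∑ j, ‖(inner ℂ x (y j) : ℂ)‖ ^ 2 ≤ BN * ‖x‖ ^ 2)
    (X : Fin N → Fin K → EuclideanSpace ℂ (Fin n))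
    (hX : ∀ j k i, X j k i = y j i * z k i) :
    ∀ x : EuclideanSpace ℂ (Fin n),
      ∑ j, ∑ k, ‖(inner ℂ x (X j k) : ℂ)‖ ^ 2 ≤
        (K : ℝ) * BN * (⨆ k : Fin K, (⨆ i : Fin n, ‖z k i‖) ^ 2) * ‖x‖ ^ 2 := by
  intro x
  set M := ⨆ k : Fin K, (⨆ i : Fin n, ‖z k i‖) ^ 2
  have hz : ∀ k i, ‖conj (z k i)‖ ^ 2 ≤ M := fun k i =>
    calc ‖conj (z k i)‖ ^ 2 = ‖z k i‖ ^ 2 := by rw [RCLike.norm_conj]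
      _ ≤ (⨆ i, ‖z k i‖) ^ 2 := by
        gcongr
        exact le_ciSup (f := fun i => ‖z k i‖) (Finite.bddAbove_range _) i
      _ ≤ M := le_ciSup (f := fun k => (⨆ i, ‖z k i‖) ^ 2) (Finite.bddAbove_range _) k
  calc ∑ j, ∑ k, ‖(inner ℂ x (X j k) : ℂ)‖ ^ 2
      = ∑ k, ∑ j, ‖⟪WithLp.toLp 2 fun i => x i * conj (z k i), y j⟫_ℂ‖ ^ 2 := by
        rw [Finset.sum_comm]
        simp only [EuclideanSpace.inner_eq_inner_mul_conj (hX _ _)]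
    _ ≤ ∑ _k : Fin K, BN * (M * ‖x‖ ^ 2) := by
        gcongr with k
        exact (hbessel _).trans (by gcongr; exact EuclideanSpace.norm_sq_mul_le x (hz k))
    _ = (K : ℝ) * BN * M * ‖x‖ ^ 2 := by
        rw [Finset.sum_const, Finset.card_univ, Fintype.card_fin, nsmul_eq_mul]
        ring

/-- The Bessel-bound claim from the proof of the multiplicative frame
construction theorem: if `y₁, …, y_N ∈ ℂⁿ` is a Bessel sequence with Bessel
bound `B_N` and `z₁, …, z_K ∈ ℂⁿ` are arbitrary, then the pointwise products
`X j k = y j ⊙ z k` form a Bessel sequence with Bessel bound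
`K · B_N · (max_k ‖z k‖_∞²)`. -/
theorem multiplicative_bessel_bound
    (n N K : ℕ) (hn : 0 < n) (hN : 0 < N) (hK : 0 < K)
    (BN : ℝ) (hBN : 0 < BN)
    (y : Fin N → EuclideanSpace ℂ (Fin n))
    (z : Fin K → EuclideanSpace ℂ (Fin n))
    (hbessel : ∀ x : EuclideanSpace ℂ (Fin n),
      ∑ j, ‖(inner ℂ x (y j) : ℂ)‖ ^ 2 ≤ BN * ‖x‖ ^ 2)
    (X : Fin N → Fin K → EuclideanSpace ℂ (Fin n))
    (hX : ∀ j k i, X j k i = y j i * z k i) :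
    ∀ x : EuclideanSpace ℂ (Fin n),
      ∑ j, ∑ k, ‖(inner ℂ x (X j k) : ℂ)‖ ^ 2 ≤
        (K : ℝ) * BN * (⨆ k : Fin K, (⨆ i : Fin n, ‖z k i‖) ^ 2) * ‖x‖ ^ 2 :=
  multiplicative_bessel_bound_general n N K BN hBN y z hbessel X hX
end

section
/- Let n, N, K be positive integers. If Y = {y_1, …, y_N} ⊆ ℂ^n \ {0} and Z = {z_1, …, z_K} ⊆ ℂ^n \ {0} are both frames for ℂ^n, then the family of pointwise products X = {y_j ⊙ z_k : 1 ≤ j ≤ N, 1 ≤ k ≤ K} is a multiplicative frame for ℂ^n; in particular, X spans ℂ^n. -/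
/-- Corollary (A construction of multiplicative frames for two frames):
If `Y = {y₁, …, y_N} ⊆ ℂⁿ \ {0}` and `Z = {z₁, …, z_K} ⊆ ℂⁿ \ {0}` are both
frames for `ℂⁿ` (equivalently, both span `ℂⁿ`), then the family of pointwise
products `X j k = y j ⊙ z k` is a multiplicative frame for `ℂⁿ`; in
particular `X` spans `ℂⁿ` (and its members factor coordinatewise by
construction). -/
theorem multiplicative_frame_of_two_frames
    (n N K : ℕ) (hn : 0 < n) (hN : 0 < N) (hK : 0 < K)
    (y : Fin N → (Fin n → ℂ)) (z : Fin K → (Fin n → ℂ))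
    (hy0 : ∀ j, y j ≠ 0) (hz0 : ∀ k, z k ≠ 0)
    (hY : Submodule.span ℂ (Set.range y) = ⊤)
    (hZ : Submodule.span ℂ (Set.range z) = ⊤)
    (X : Fin N → Fin K → (Fin n → ℂ))
    (hX : ∀ j k i, X j k i = y j i * z k i) :
    Submodule.span ℂ (Set.range fun p : Fin N × Fin K => X p.1 p.2) = ⊤ := by
  rw [eq_top_iff]
  -- it suffices to show each standard basis vector is in the span
  have hbasis : ∀ i : Fin n,
      Pi.single i (1 : ℂ) ∈
        Submodule.span ℂ (Set.range fun p : Fin N × Fin K => X p.1 p.2) := by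
    intro i
    -- find j with y j i ≠ 0
    have hj : ∃ j, y j i ≠ 0 := by
      by_contra h
      push_neg at h
      -- then span of y is in the kernel of evaluation at i
      have hker : Submodule.span ℂ (Set.range y) ≤
          LinearMap.ker (LinearMap.proj (R := ℂ) (φ := fun _ : Fin n => ℂ) i) := by
        rw [Submodule.span_le]
        rintro _ ⟨j, rfl⟩
        simpa using h j
      rw [hY, top_le_iff] at hker
      have : Pi.single i (1 : ℂ) ∈
          LinearMap.ker (LinearMap.proj (R := ℂ) (φ := fun _ : Fin n => ℂ) i) := by
        rw [hker]; trivial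
      simp at this
    obtain ⟨j, hji⟩ := hj
    -- multiplication by y j
    set L : (Fin n → ℂ) →ₗ[ℂ] (Fin n → ℂ) := LinearMap.mulLeft ℂ (y j) with hL
    have hmap : Submodule.map L (Submodule.span ℂ (Set.range z)) ≤
        Submodule.span ℂ (Set.range fun p : Fin N × Fin K => X p.1 p.2) := by
      rw [Submodule.map_span, Submodule.span_le]
      rintro _ ⟨_, ⟨k, rfl⟩, rfl⟩
      apply Submodule.subset_span
      refine ⟨(j, k), ?_⟩
      funext i'
      simp [hL, LinearMap.mulLeft_apply, hX, Pi.mul_apply]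
    apply hmap
    refine ⟨Pi.single i (y j i)⁻¹, by rw [hZ]; trivial, ?_⟩
    funext i'
    by_cases h : i' = i
    · subst h
      simp [hL, LinearMap.mulLeft_apply, Pi.mul_apply, mul_inv_cancel₀ hji]
    · simp [hL, LinearMap.mulLeft_apply, Pi.mul_apply, Pi.single_eq_of_ne h]
  intro x _
  have : x = ∑ i : Fin n, x i • (Pi.single i (1 : ℂ) : Fin n → ℂ) := by
    funext i'
    simp [Finset.sum_apply, Pi.single_apply]
  rw [this]
  exact Submodule.sum_mem _ fun i _ => Submodule.smul_mem _ _ (hbasis i)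
end

section
/- Let N > 1 and n ≤ N and K ≥ 1 be integers, and let γ_1, …, γ_N ∈ ℂ^n and α_1, …, α_K ∈ ℂ^n encode a separable sensing scenario. Assume: (i) for every i ∈ {1, …, n} there exists k with α_k(i) ≠ 0 (i-radiativity); and (ii) there exist pairwise distinct indices j_1, …, j_n ∈ {1, …, N} such that for every i ∈ {1, …, n} and every ℓ ≠ j_i, |γ_{j_i}(i)| > (N − 1)·|γ_ℓ(i)| (strong i-dominance for each i, with pairwise distinct dominant sensors, as selected in the paper's proof). Define w_{j,k} ∈ ℂ^n by w_{j,k}(i) = |γ_j(i)|·|α_k(i)| for i = 1, …, n (the images of the magnitude sum frame mapping). Then the family { w_{j,k} : 1 ≤ j ≤ N, 1 ≤ k ≤ K } spans ℂ^n and hence is a multiplicative frame for ℂ^n. -/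
/-!
Put `g j i = |γ j i|` and `a k i = |α k i|`, so that `w j k = a k * g j` coordinatewise. Strong
dominance makes `|γ (jsel i) i|` exceed the sum of all other `|γ ℓ i|`; since `jsel` is
injective, the matrix `(|γ (jsel i') i|)_{i,i'}` is then strictly diagonally dominant, hence
invertible (Gershgorin), so the `g j` span `ℂⁿ`. Hence every `a k * u` lies in the span of the
`w j k`, and `e_i = a k * (e_i / a k i)` for any `k` radiating at `i`.
-/

open Finset Submodule

section
variable {ι κ : Type*} [Fintype κ] [DecidableEq κ]

theorem Finset.sum_erase_lt_of_card_sub_one_mul_lt {x : κ → ℝ} {j : κ}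
    (hκ : 1 < Fintype.card κ) (h : ∀ ℓ ≠ j, ((Fintype.card κ : ℝ) - 1) * x ℓ < x j) :
    ∑ ℓ ∈ univ.erase j, x ℓ < x j := by
  have hcard : ((univ.erase j).card : ℝ) = (Fintype.card κ : ℝ) - 1 := by
    rw [card_erase_of_mem (mem_univ j), card_univ, Nat.cast_sub hκ.le, Nat.cast_one]
  have hpos : (0 : ℝ) < (Fintype.card κ : ℝ) - 1 := sub_pos.2 (by exact_mod_cast hκ)
  have hne : (univ.erase j).Nonempty := by
    rw [← card_pos, ← Nat.cast_pos (α := ℝ), hcard]; exact hpos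
  refine lt_of_mul_lt_mul_left ?_ hpos.le
  calc ((Fintype.card κ : ℝ) - 1) * ∑ ℓ ∈ univ.erase j, x ℓ
      = ∑ ℓ ∈ univ.erase j, ((Fintype.card κ : ℝ) - 1) * x ℓ := mul_sum _ _ _
    _ < ∑ _ℓ ∈ univ.erase j, x j :=
        sum_lt_sum_of_nonempty hne fun ℓ hℓ => h ℓ (ne_of_mem_erase hℓ)
    _ = ((Fintype.card κ : ℝ) - 1) * x j := by rw [sum_const, nsmul_eq_mul, hcard]

theorem Finset.sum_erase_comp_le [Fintype ι] [DecidableEq ι] {e : ι → κ}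
    (he : Function.Injective e) {x : κ → ℝ} (hx : ∀ ℓ, 0 ≤ x ℓ) (i : ι) :
    ∑ i' ∈ univ.erase i, x (e i') ≤ ∑ ℓ ∈ univ.erase (e i), x ℓ := by
  rw [← sum_image fun _ _ _ _ h => he h]
  refine sum_le_sum_of_subset_of_nonneg ?_ fun ℓ _ _ => hx ℓ
  rintro _ hℓ
  obtain ⟨i', hi', rfl⟩ := mem_image.1 hℓ
  exact mem_erase.2 ⟨fun h => ne_of_mem_erase hi' (he h), mem_univ _⟩

end

section
variable {𝕜 ι κ : Type*} [NormedField 𝕜] [Fintype ι] [DecidableEq ι] [Fintype κ] [DecidableEq κ]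

theorem span_range_eq_top_of_injective_diag_dominant {g : κ → ι → 𝕜} {e : ι → κ}
    (he : Function.Injective e)
    (hdom : ∀ i, ∑ ℓ ∈ univ.erase (e i), ‖g ℓ i‖ < ‖g (e i) i‖) :
    span 𝕜 (Set.range g) = ⊤ := by
  let A : Matrix ι ι 𝕜 := Matrix.of fun i i' => g (e i') i
  have hA : A.det ≠ 0 := det_ne_zero_of_sum_row_lt_diag fun i =>
    (sum_erase_comp_le he (fun ℓ => norm_nonneg (g ℓ i)) i).trans_lt (hdom i)
  have hcols : LinearIndependent 𝕜 A.col :=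
    Matrix.linearIndependent_cols_of_isUnit ((Matrix.isUnit_iff_isUnit_det A).2 hA.isUnit)
  refine eq_top_iff.2 ((hcols.span_eq_top_of_card_eq_finrank' ?_).ge.trans (span_mono ?_))
  · simp
  · rintro _ ⟨i', rfl⟩
    exact ⟨e i', rfl⟩

end

section
variable {𝕜 ι κ κ' : Type*} [Field 𝕜] [Fintype ι] [DecidableEq ι]

theorem span_range_mul_eq_top {a : κ' → ι → 𝕜} {g : κ → ι → 𝕜}
    (hg : span 𝕜 (Set.range g) = ⊤) (ha : ∀ i, ∃ k, a k i ≠ 0) :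
    span 𝕜 (Set.range fun p : κ × κ' => a p.2 * g p.1) = ⊤ := by
  have hmul : ∀ k u, a k * u ∈ span 𝕜 (Set.range fun p : κ × κ' => a p.2 * g p.1) := by
    intro k u
    have hu : a k * u ∈ (span 𝕜 (Set.range g)).map (LinearMap.mulLeft 𝕜 (a k)) :=
      mem_map_of_mem (hg ▸ mem_top)
    rw [map_span, ← Set.range_comp] at hu
    refine span_mono ?_ hu
    rintro _ ⟨j, rfl⟩
    exact ⟨(j, k), rfl⟩
  refine eq_top_iff.2 fun v _ => ?_
  rw [← (Pi.basisFun 𝕜 ι).sum_repr v]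
  refine sum_mem fun i _ => smul_mem _ _ ?_
  obtain ⟨k, hk⟩ := ha i
  have hsingle : Pi.basisFun 𝕜 ι i = a k * Pi.single i (a k i)⁻¹ := by
    rw [Pi.basisFun_apply, ← Pi.single_mul_right (f := a k), mul_inv_cancel₀ hk]
  exact hsingle ▸ hmul k _

end

theorem strong_dominance_multiplicative_frame_general
    (n N K : ℕ) (hN1 : 1 < N)
    (γ : Fin N → Fin n → ℂ) (α : Fin K → Fin n → ℂ)
    (hrad : ∀ i : Fin n, ∃ k : Fin K, α k i ≠ 0)
    (hdom : ∃ jsel : Fin n → Fin N, Function.Injective jsel ∧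
      ∀ i : Fin n, ∀ ℓ : Fin N, ℓ ≠ jsel i →
        ((N : ℝ) - 1) * ‖γ ℓ i‖ < ‖γ (jsel i) i‖)
    (w : Fin N → Fin K → (Fin n → ℂ))
    (hw : ∀ j k i, w j k i =
      ((‖γ j i‖ * ‖α k i‖ : ℝ) : ℂ)) :
    Submodule.span ℂ (Set.range fun p : Fin N × Fin K => w p.1 p.2) = ⊤ := by
  obtain ⟨jsel, hinj, hjsel⟩ := hdom
  let g : Fin N → Fin n → ℂ := fun j i => (‖γ j i‖ : ℂ)
  let a : Fin K → Fin n → ℂ := fun k i => (‖α k i‖ : ℂ)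
  have hw' : (fun p : Fin N × Fin K => w p.1 p.2) = fun p => a p.2 * g p.1 := by
    ext p i
    simp [hw, g, a, mul_comm]
  have hg : span ℂ (Set.range g) = ⊤ :=
    span_range_eq_top_of_injective_diag_dominant hinj fun i => by
      simpa [g] using sum_erase_lt_of_card_sub_one_mul_lt (x := fun ℓ => ‖γ ℓ i‖)
        (by simpa using hN1) (by simpa using hjsel i)
  rw [hw']
  exact span_range_mul_eq_top hg fun i => (hrad i).imp fun k hk => by simpa [a] using hk

/-- Theorem (Strong dominance and multiplicative frames):
Let `N > 1`, `n ≤ N`, `K ≥ 1`, and let `γ₁, …, γ_N ∈ ℂⁿ` and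
`α₁, …, α_K ∈ ℂⁿ` encode a separable sensing scenario. Assume:
(i) `i`-radiativity for every `i` (`∃ k, α k i ≠ 0`); and
(ii) there are pairwise distinct indices `j_1, …, j_n` with
`|γ (j i) i| > (N - 1) · |γ ℓ i|` for every `i` and every `ℓ ≠ j i`
(strong `i`-dominance with pairwise distinct dominant sensors).
Let `w j k` be the images of the magnitude sum frame mapping,
`w j k i = |γ j i| · |α k i|`. Then `{ w j k : j, k }` spans `ℂⁿ` and hence
is a multiplicative frame for `ℂⁿ`. -/
theorem strong_dominance_multiplicative_frame
    (n N K : ℕ) (hN1 : 1 < N) (hnN : n ≤ N) (hK : 1 ≤ K)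
    (γ : Fin N → Fin n → ℂ) (α : Fin K → Fin n → ℂ)
    (hrad : ∀ i : Fin n, ∃ k : Fin K, α k i ≠ 0)
    (hdom : ∃ jsel : Fin n → Fin N, Function.Injective jsel ∧
      ∀ i : Fin n, ∀ ℓ : Fin N, ℓ ≠ jsel i →
        ((N : ℝ) - 1) * ‖γ ℓ i‖ < ‖γ (jsel i) i‖)
    (w : Fin N → Fin K → (Fin n → ℂ))
    (hw : ∀ j k i, w j k i =
      ((‖γ j i‖ * ‖α k i‖ : ℝ) : ℂ)) :
    Submodule.span ℂ (Set.range fun p : Fin N × Fin K => w p.1 p.2) = ⊤ :=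
  strong_dominance_multiplicative_frame_general n N K hN1 γ α hrad hdom w hw
end

section
/- Let N > 1 and n ≤ N and K ≥ 1 be integers, and let γ_1, …, γ_N ∈ ℂ^n and α_1, …, α_K ∈ ℂ^n. Assume: (i) for every i ∈ {1, …, n} there exists k with α_k(i) ≠ 0; and (ii) there exist pairwise distinct indices j_1, …, j_n ∈ {1, …, N} such that for every i and every ℓ ≠ j_i, |γ_{j_i}(i)| > (N − 1)·|γ_ℓ(i)|. For each i ∈ {1, …, n} choose k_i′ ∈ {1, …, K} with |α_{k_i′}(i)| = max_{1 ≤ k ≤ K} |α_k(i)| (so that α_{k_i′}(i) ≠ 0 by (i)). Then the n vectors u_1, …, u_n ∈ ℂ^n defined by u_i(h) = γ_{j_i}(h)·α_{k_i′}(h) for h = 1, …, n (i.e., u_i = γ_{j_i} ⊙ α_{k_i′}) are linearly independent, and hence form a basis for ℂ^n. -/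
/-!
Put the vectors `u i` as the rows of a square matrix. In column `i`, the maximality of
`α (ki' i) i` bounds every off-diagonal entry `γ (jsel k) i * α (ki' k) i` by
`‖γ (jsel k) i‖ * ‖α (ki' i) i‖`, and strong `i`-dominance then makes `N - 1` times that
smaller than the diagonal entry. As there are only `n - 1 ≤ N - 1` off-diagonal entries, the
matrix is strictly column diagonally dominant, hence invertible by Gershgorin's theorem.
-/

open Finset

theorem Finset.sum_lt_of_forall_mul_lt {ι 𝕜 : Type*} [Field 𝕜] [LinearOrder 𝕜]
    [IsStrictOrderedRing 𝕜] {s : Finset ι} {f : ι → 𝕜} {a c : 𝕜}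
    (ha : 0 < a) (hc : (#s : 𝕜) ≤ c) (hf : ∀ k ∈ s, c * f k < a) :
    ∑ k ∈ s, f k < a := by
  rcases s.eq_empty_or_nonempty with rfl | hs
  · simpa using ha
  have hc0 : 0 < c := (Nat.cast_pos.mpr hs.card_pos).trans_le hc
  refine lt_of_mul_lt_mul_left ?_ hc0.le
  calc c * ∑ k ∈ s, f k = ∑ k ∈ s, c * f k := mul_sum s f c
    _ < ∑ _k ∈ s, a := sum_lt_sum_of_nonempty hs hf
    _ = #s * a := by rw [sum_const, nsmul_eq_mul]
    _ ≤ c * a := by gcongr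

theorem Matrix.det_ne_zero_of_forall_mul_col_lt_diag {ι K : Type*} [Fintype ι] [DecidableEq ι]
    [NormedField K] {A : Matrix ι ι K} {c : ℝ} (hc : (Fintype.card ι : ℝ) - 1 ≤ c)
    (hdiag : ∀ i, A i i ≠ 0) (h : ∀ i k, k ≠ i → c * ‖A k i‖ < ‖A i i‖) :
    A.det ≠ 0 := by
  refine det_ne_zero_of_sum_col_lt_diag fun i => ?_
  refine sum_lt_of_forall_mul_lt (norm_pos_iff.mpr (hdiag i)) ?_
    fun k hk => h i k (ne_of_mem_erase hk)
  rwa [card_erase_of_mem (mem_univ i), card_univ, Nat.cast_pred (Fintype.card_pos_iff.mpr ⟨i⟩)]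

theorem mul_norm_mul_lt_norm_mul {R : Type*} [SeminormedRing R] [NormMulClass R]
    {x x' y y' : R} {c : ℝ} (hc : 0 ≤ c) (hx : c * ‖x'‖ < ‖x‖) (hy : ‖y'‖ ≤ ‖y‖)
    (hy0 : 0 < ‖y‖) : c * ‖x' * y'‖ < ‖x * y‖ := by
  rw [norm_mul, norm_mul]
  calc c * (‖x'‖ * ‖y'‖) ≤ c * ‖x'‖ * ‖y‖ := by rw [← mul_assoc]; gcongr
    _ < ‖x‖ * ‖y‖ := mul_lt_mul_of_pos_right hx hy0

theorem strong_dominance_basis_general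
    (n N K : ℕ) (hN1 : 1 < N) (hnN : n ≤ N)
    (γ : Fin N → Fin n → ℂ) (α : Fin K → Fin n → ℂ)
    (hrad : ∀ i : Fin n, ∃ k : Fin K, α k i ≠ 0)
    (jsel : Fin n → Fin N) (hjsel : Function.Injective jsel)
    (hdom : ∀ i : Fin n, ∀ ℓ : Fin N, ℓ ≠ jsel i →
      ((N : ℝ) - 1) * ‖γ ℓ i‖ < ‖γ (jsel i) i‖)
    (ki' : Fin n → Fin K)
    (hmax : ∀ i : Fin n, ∀ k : Fin K,
      ‖α k i‖ ≤ ‖α (ki' i) i‖)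
    (u : Fin n → (Fin n → ℂ))
    (hu : ∀ i h, u i h = γ (jsel i) h * α (ki' i) h) :
    LinearIndependent ℂ u ∧ Submodule.span ℂ (Set.range u) = ⊤ := by
  have hN : (0 : ℝ) ≤ N - 1 := by
    rw [sub_nonneg]; exact_mod_cast hN1.le
  have hα : ∀ i, 0 < ‖α (ki' i) i‖ := fun i => by
    obtain ⟨k, hk⟩ := hrad i
    exact (norm_pos_iff.mpr hk).trans_le (hmax i k)
  have hγ : ∀ i, 0 < ‖γ (jsel i) i‖ := fun i => by
    have : Nontrivial (Fin N) := Fin.nontrivial_iff_two_le.mpr hN1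
    obtain ⟨ℓ, hℓ⟩ := exists_ne (jsel i)
    exact (mul_nonneg hN (norm_nonneg _)).trans_lt (hdom i ℓ hℓ)
  have hdet : (Matrix.of u).det ≠ 0 := by
    refine Matrix.det_ne_zero_of_forall_mul_col_lt_diag (c := N - 1) ?_ (fun i => ?_)
      fun i k hki => ?_
    · simpa using hnN
    · rw [Matrix.of_apply, hu]
      exact mul_ne_zero (norm_pos_iff.mp (hγ i)) (norm_pos_iff.mp (hα i))
    · simpa only [Matrix.of_apply, hu] using mul_norm_mul_lt_norm_mul hN
        (hdom i (jsel k) (hjsel.ne hki)) (hmax i (ki' k)) (hα i)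
  have hli : LinearIndependent ℂ u := Matrix.linearIndependent_rows_of_det_ne_zero hdet
  exact ⟨hli, hli.span_eq_top_of_card_eq_finrank' (by simp)⟩

/-- The key intermediate claim in the proof of the theorem on strong
dominance and multiplicative frames: with `N > 1`, `n ≤ N`, `K ≥ 1`,
`i`-radiativity (`∃ k, α k i ≠ 0` for every `i`), pairwise distinct indices
`jsel 1, …, jsel n` satisfying strong `i`-dominance
(`|γ (jsel i) i| > (N - 1) · |γ ℓ i|` for every `ℓ ≠ jsel i`), and times
`ki' i` chosen so that `|α (ki' i) i|` is maximal over `k`, the `n` vectors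
`u i = γ (jsel i) ⊙ α (ki' i)` (pointwise products) are linearly
independent, and hence form a basis for `ℂⁿ`. -/
theorem strong_dominance_basis
    (n N K : ℕ) (hN1 : 1 < N) (hnN : n ≤ N) (hK : 1 ≤ K)
    (γ : Fin N → Fin n → ℂ) (α : Fin K → Fin n → ℂ)
    (hrad : ∀ i : Fin n, ∃ k : Fin K, α k i ≠ 0)
    (jsel : Fin n → Fin N) (hjsel : Function.Injective jsel)
    (hdom : ∀ i : Fin n, ∀ ℓ : Fin N, ℓ ≠ jsel i →
      ((N : ℝ) - 1) * ‖γ ℓ i‖ < ‖γ (jsel i) i‖)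
    (ki' : Fin n → Fin K)
    (hmax : ∀ i : Fin n, ∀ k : Fin K,
      ‖α k i‖ ≤ ‖α (ki' i) i‖)
    (u : Fin n → (Fin n → ℂ))
    (hu : ∀ i h, u i h = γ (jsel i) h * α (ki' i) h) :
    LinearIndependent ℂ u ∧ Submodule.span ℂ (Set.range u) = ⊤ :=
  strong_dominance_basis_general n N K hN1 hnN γ α hrad jsel hjsel hdom ki' hmax u hu
end
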